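/- arXiv:2405.11339 — 2 statements merged into one kernel-verified Lean document; each statement's English description precedes it below -/
import Mathlib

section
/- Let α ∈ (0,1) and μ > 0. Then for every η > 0 the function t ↦ t^{α−1} E_{α,α}(−μ t^α) is integrable on (0, η) and ∫_0^η t^{α−1} E_{α,α}(−μ t^α) dt = (1 − E_{α,1}(−μ η^α)) / μ. -/
open Real MeasureTheory

/-- The real two-parameter Mittag-Leffler function `E_{α,β}(x) = ∑_{j=0}^∞ x^j / Γ(jα + β)`.
`Real.Gamma` vanishes at the nonpositive integers, so the corresponding terms are `0`. -/
noncomputable def mittagLefflerReal (α β : ℝ) (x : ℝ) : ℝ :=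
  ∑' j : ℕ, x ^ j / Real.Gamma ((j : ℝ) * α + β)

/-!
Expanding `E_{α,α}` termwise, `t^{α-1} E_{α,α}(-μ t^α) = ∑ⱼ (-μ)^j t^{(j+1)α-1} / Γ((j+1)α)`, and
the `j`-th term integrates over `(0, η)` to `η^α (-μ η^α)^j / Γ((j+1)α + 1)`. The integrals of the
absolute values form again a Mittag-Leffler series, so sum and integral may be exchanged, giving
`η^α E_{α,α+1}(-μ η^α)`; shifting the index in `E_{α,1}` shows `E_{α,1}(x) = 1 + x E_{α,α+1}(x)`.
All these series converge by the ratio test, since `Γ(y + α) / Γ(y) → ∞` by log-convexity of `Γ`.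
-/

open Filter Set

theorem MeasureTheory.integrable_tsum_of_summable_integral_norm {X E ι : Type*}
    [MeasurableSpace X] {μ : Measure X} [NormedAddCommGroup E] [CompleteSpace E] [Countable ι]
    {F : ι → X → E} (hF_int : ∀ i, Integrable (F i) μ)
    (hF_sum : Summable fun i ↦ ∫ a, ‖F i a‖ ∂μ) :
    Integrable (fun a ↦ ∑' i, F i a) μ := by
  let f : ι → X →₁[μ] E := fun i ↦ (hF_int i).toL1 (F i)
  have hf : ∑' i, ‖f i‖ₑ ≠ ⊤ := by
    refine tsum_enorm_ne_top_iff_summable_norm.2 (hF_sum.congr fun i ↦ ?_)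
    rw [L1.norm_eq_integral_norm]
    exact integral_congr_ae ((hF_int i).coeFn_toL1.fun_comp norm).symm
  -- the sum of the series in `L¹` is a.e. its pointwise sum
  refine (L1.integrable_coeFn (∑' i, f i)).congr ?_
  filter_upwards [Lp.coeFn_tsum hf, ae_all_iff.2 fun i ↦ (hF_int i).coeFn_toL1] with a hsum hF
  rw [hsum]
  exact tsum_congr hF

namespace Real

theorem mul_Gamma_le_Gamma_add_mul_rpow {a y : ℝ} (ha0 : 0 ≤ a) (ha1 : a ≤ 1) (hy : 0 < y) :
    y * Gamma y ≤ Gamma (y + a) * (y + a) ^ (1 - a) := by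
  have hya : 0 < y + a := by linarith
  have hΓ : 0 < Gamma (y + a) := Gamma_pos_of_pos hya
  -- log-convexity of `Γ` between `y + a` and `y + a + 1`, whose `(a, 1 - a)`-mean is `y + 1`
  have hconv := convexOn_log_Gamma.2 (mem_Ioi.2 hya) (mem_Ioi.2 (by linarith : 0 < y + a + 1))
    ha0 (sub_nonneg.2 ha1) (by ring)
  simp only [Function.comp, smul_eq_mul] at hconv
  rw [show a * (y + a) + (1 - a) * (y + a + 1) = y + 1 by ring, Gamma_add_one hy.ne',
    Gamma_add_one hya.ne', log_mul hya.ne' hΓ.ne'] at hconv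
  calc y * Gamma y = exp (log (y * Gamma y)) := (exp_log (mul_pos hy (Gamma_pos_of_pos hy))).symm
    _ ≤ exp (log (Gamma (y + a)) + (1 - a) * log (y + a)) := exp_le_exp.2 (by linarith)
    _ = Gamma (y + a) * (y + a) ^ (1 - a) := by
      rw [exp_add, exp_log hΓ, rpow_def_of_pos hya, mul_comm (1 - a)]

theorem tendsto_Gamma_add_div_Gamma_atTop {a : ℝ} (ha0 : 0 < a) (ha1 : a ≤ 1) :
    Tendsto (fun y ↦ Gamma (y + a) / Gamma y) atTop atTop := by
  have hlim : Tendsto (fun y : ℝ ↦ (y + a) ^ a / 2) atTop atTop :=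
    ((tendsto_rpow_atTop ha0).comp (tendsto_atTop_add_const_right _ a tendsto_id)).atTop_div_const
      two_pos
  refine tendsto_atTop_mono' _ ?_ hlim
  filter_upwards [eventually_ge_atTop a] with y hy
  have hy0 : 0 < y := ha0.trans_le hy
  have hya : 0 < y + a := by linarith
  have hsplit : (y + a) ^ a * (y + a) ^ (1 - a) = y + a := by
    rw [← rpow_add hya, add_sub_cancel, rpow_one]
  have hpos : 0 < (y + a) ^ (1 - a) := rpow_pos_of_pos hya _
  rw [le_div_iff₀ (Gamma_pos_of_pos hy0)]
  refine le_of_mul_le_mul_right ?_ hpos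
  calc (y + a) ^ a / 2 * Gamma y * (y + a) ^ (1 - a)
        = (y + a) ^ a * (y + a) ^ (1 - a) / 2 * Gamma y := by ring
    _ = (y + a) / 2 * Gamma y := by rw [hsplit]
    _ ≤ y * Gamma y := by gcongr; linarith
    _ ≤ Gamma (y + a) * (y + a) ^ (1 - a) := mul_Gamma_le_Gamma_add_mul_rpow ha0.le ha1 hy0

end Real

theorem summable_pow_div_Gamma {α : ℝ} (hα0 : 0 < α) (hα1 : α ≤ 1) (β x : ℝ) :
    Summable fun j : ℕ ↦ x ^ j / Gamma (j * α + β) := by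
  have hy : Tendsto (fun j : ℕ ↦ (j : ℝ) * α + β) atTop atTop :=
    tendsto_atTop_add_const_right _ β (tendsto_natCast_atTop_atTop.atTop_mul_const hα0)
  refine summable_of_ratio_norm_eventually_le (r := 1 / 2) (by norm_num) ?_
  filter_upwards [hy.eventually_gt_atTop 0,
    hy.eventually ((Real.tendsto_Gamma_add_div_Gamma_atTop hα0 hα1).eventually_ge_atTop (2 * |x|))]
    with j hpos hratio
  have hΓ := Gamma_pos_of_pos hpos
  have hΓ' := Gamma_pos_of_pos (by linarith : 0 < (j : ℝ) * α + β + α)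
  rw [le_div_iff₀ hΓ, ← Real.norm_eq_abs] at hratio
  push_cast
  rw [show ((j : ℝ) + 1) * α + β = j * α + β + α by ring, norm_div, norm_div, norm_pow, norm_pow,
    Real.norm_of_nonneg hΓ.le, Real.norm_of_nonneg hΓ'.le, pow_succ, div_le_iff₀ hΓ']
  calc ‖x‖ ^ j * ‖x‖ = 1 / 2 * (‖x‖ ^ j / Gamma (j * α + β)) * (2 * ‖x‖ * Gamma (j * α + β)) := by
        field_simp
    _ ≤ 1 / 2 * (‖x‖ ^ j / Gamma (j * α + β)) * Gamma (j * α + β + α) := by gcongr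

theorem mittagLefflerReal_one_eq_one_add_mul {α : ℝ} (hα0 : 0 < α) (hα1 : α ≤ 1) (x : ℝ) :
    mittagLefflerReal α 1 x = 1 + x * mittagLefflerReal α (α + 1) x := by
  rw [mittagLefflerReal, (summable_pow_div_Gamma hα0 hα1 1 x).tsum_eq_zero_add, mittagLefflerReal,
    ← tsum_mul_left]
  congr 1
  · simp
  · refine tsum_congr fun j ↦ ?_
    rw [pow_succ', mul_div_assoc, Nat.cast_succ, add_one_mul, add_assoc]

noncomputable def mittagLefflerKernelTerm (α c : ℝ) (j : ℕ) (t : ℝ) : ℝ :=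
  c ^ j / Gamma (j * α + α) * t ^ (j * α + α - 1)

section KernelTerm

variable {α : ℝ}

theorem hasSum_mittagLefflerKernelTerm (hα0 : 0 < α) (hα1 : α ≤ 1) (c : ℝ) {t : ℝ} (ht : 0 < t) :
    HasSum (fun j ↦ mittagLefflerKernelTerm α c j t)
      (t ^ (α - 1) * mittagLefflerReal α α (c * t ^ α)) := by
  refine ((summable_pow_div_Gamma hα0 hα1 α _).hasSum.mul_left (t ^ (α - 1))).congr_fun
    fun j ↦ ?_
  rw [mittagLefflerKernelTerm, mul_pow, ← rpow_natCast (t ^ α), ← rpow_mul ht.le,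
    show (j : ℝ) * α + α - 1 = α - 1 + α * j by ring, rpow_add ht]
  ring

theorem norm_mittagLefflerKernelTerm (hα : 0 < α) (c : ℝ) (j : ℕ) {t : ℝ} (ht : 0 ≤ t) :
    ‖mittagLefflerKernelTerm α c j t‖ = mittagLefflerKernelTerm α |c| j t := by
  rw [mittagLefflerKernelTerm, mittagLefflerKernelTerm, norm_mul, norm_div, norm_pow,
    Real.norm_of_nonneg (Gamma_pos_of_pos (by positivity)).le,
    Real.norm_of_nonneg (rpow_nonneg ht _), Real.norm_eq_abs]

theorem integrableOn_mittagLefflerKernelTerm (hα : 0 < α) (c : ℝ) (j : ℕ) {η : ℝ} (hη : 0 ≤ η) :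
    IntegrableOn (mittagLefflerKernelTerm α c j) (Ioo 0 η) := by
  have h := intervalIntegral.intervalIntegrable_rpow' (a := 0) (b := η)
    (r := (j : ℝ) * α + α - 1) (by nlinarith [j.cast_nonneg (α := ℝ)])
  rw [intervalIntegrable_iff_integrableOn_Ioo_of_le hη] at h
  exact h.const_mul _

theorem integral_mittagLefflerKernelTerm (hα : 0 < α) (c : ℝ) (j : ℕ) {η : ℝ} (hη : 0 < η) :
    ∫ t in Ioo 0 η, mittagLefflerKernelTerm α c j t =
      η ^ α * ((c * η ^ α) ^ j / Gamma (j * α + (α + 1))) := by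
  have hexp : 0 < (j : ℝ) * α + α := by positivity
  simp only [mittagLefflerKernelTerm]
  rw [integral_const_mul, ← integral_Ioc_eq_integral_Ioo, ← intervalIntegral.integral_of_le hη.le,
    integral_rpow (Or.inl (by linarith)), sub_add_cancel, zero_rpow hexp.ne', sub_zero,
    show (j : ℝ) * α + (α + 1) = j * α + α + 1 by ring, Gamma_add_one hexp.ne', mul_pow,
    ← rpow_natCast (η ^ α), ← rpow_mul hη.le, show (j : ℝ) * α + α = α + α * j by ring,
    rpow_add hη]
  field_simp

theorem summable_integral_norm_mittagLefflerKernelTerm (hα0 : 0 < α) (hα1 : α ≤ 1) (c : ℝ)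
    {η : ℝ} (hη : 0 < η) :
    Summable fun j ↦ ∫ t in Ioo 0 η, ‖mittagLefflerKernelTerm α c j t‖ := by
  refine ((summable_pow_div_Gamma hα0 hα1 (α + 1) (|c| * η ^ α)).mul_left (η ^ α)).congr
    fun j ↦ ?_
  rw [setIntegral_congr_fun measurableSet_Ioo
    fun t ht ↦ norm_mittagLefflerKernelTerm hα0 c j ht.1.le,
    integral_mittagLefflerKernelTerm hα0 |c| j hη]

end KernelTerm

/-- For `α ∈ (0,1)`, `μ > 0` and `η > 0`, the function `t ↦ t^{α−1} E_{α,α}(−μ t^α)` is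
integrable on `(0, η)` and
`∫_0^η t^{α−1} E_{α,α}(−μ t^α) dt = (1 − E_{α,1}(−μ η^α)) / μ`. -/
theorem mittagLeffler_integral (α μ η : ℝ) (hα0 : 0 < α) (hα1 : α < 1)
    (hμ : 0 < μ) (hη : 0 < η) :
    IntegrableOn (fun t : ℝ => t ^ (α - 1) * mittagLefflerReal α α (-μ * t ^ α))
      (Set.Ioo 0 η) ∧
    ∫ t in Set.Ioo (0 : ℝ) η, t ^ (α - 1) * mittagLefflerReal α α (-μ * t ^ α) =
      (1 - mittagLefflerReal α 1 (-μ * η ^ α)) / μ := by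
  have hF_int := fun j ↦ integrableOn_mittagLefflerKernelTerm hα0 (-μ) j hη.le
  have hF_sum := summable_integral_norm_mittagLefflerKernelTerm hα0 hα1.le (-μ) hη
  have hseries : EqOn (fun t ↦ t ^ (α - 1) * mittagLefflerReal α α (-μ * t ^ α))
      (fun t ↦ ∑' j, mittagLefflerKernelTerm α (-μ) j t) (Ioo 0 η) := fun t ht ↦
    (hasSum_mittagLefflerKernelTerm hα0 hα1.le (-μ) ht.1).tsum_eq.symm
  refine ⟨IntegrableOn.congr_fun (integrable_tsum_of_summable_integral_norm hF_int hF_sum)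
    hseries.symm measurableSet_Ioo, ?_⟩
  calc ∫ t in Ioo 0 η, t ^ (α - 1) * mittagLefflerReal α α (-μ * t ^ α)
      = ∑' j, ∫ t in Ioo 0 η, mittagLefflerKernelTerm α (-μ) j t := by
        rw [setIntegral_congr_fun measurableSet_Ioo hseries,
          integral_tsum_of_summable_integral_norm hF_int hF_sum]
    _ = η ^ α * mittagLefflerReal α (α + 1) (-μ * η ^ α) := by
        rw [tsum_congr fun j ↦ integral_mittagLefflerKernelTerm hα0 (-μ) j hη, tsum_mul_left]
        rfl
    _ = (1 - mittagLefflerReal α 1 (-μ * η ^ α)) / μ := by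
        rw [mittagLefflerReal_one_eq_one_add_mul hα0 hα1.le]
        field_simp
        ring
end

section
/- Let α ∈ (0,1), T > 0, and let v : [0,T] → ℝ be continuously differentiable; set v₁(s) = s v(s) and v₂(s) = s² v(s), so v₂′(s) = 2s v(s) + s² v′(s). Then for every t ∈ (0,T] one has t² (I^α v′)(t) = (I^α v₂′)(t) + 2(α−1) (I^α v₁)(t) + α(α−1) (I^{α+1} v)(t) − t² κ_α(t) v(0), where κ_α(t) = t^{α−1}/Γ(α). -/
/-!
With `κ_β(x) = x^{β−1}/Γ(β)` one has `α κ_{α+1}(x) = x κ_α(x)` and `κ_{α+1}' = κ_α`. Hence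
`F(s) = α (t+s) κ_{α+1}(t−s) v(s) = (t²−s²) κ_α(t−s) v(s)` is continuous on `[0,t]`, vanishes at
`s = t`, equals `t² κ_α(t) v(0)` at `s = 0`, and its derivative on `(0,t)` is exactly the
difference of the integrands of the two sides. The identity is the fundamental theorem of
calculus for `F` on `[0,t]`.
-/

open Real MeasureTheory

/-- The Riemann–Liouville fractional integral
`(I^β v)(t) = ∫_0^t (t−s)^{β−1}/Γ(β) · v(s) ds`. -/
noncomputable def fracInt (β : ℝ) (v : ℝ → ℝ) (t : ℝ) : ℝ :=
  ∫ s in Set.Ioo (0 : ℝ) t, (t - s) ^ (β - 1) / Real.Gamma β * v s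

open Set intervalIntegral

/-- The kernel `κ_β`. -/
noncomputable def rlKernel (β x : ℝ) : ℝ :=
  x ^ (β - 1) / Gamma β

theorem rlKernel_add_one {β x : ℝ} (hβ : β ≠ 0) (hx : x ≠ 0) :
    rlKernel (β + 1) x = x * rlKernel β x / β := by
  rw [rlKernel, rlKernel, add_sub_cancel_right, Gamma_add_one hβ, rpow_sub_one hx]
  field_simp

theorem hasDerivAt_rlKernel_add_one {β x : ℝ} (hβ : β ≠ 0) (hx : 0 < x) :
    HasDerivAt (rlKernel (β + 1)) (rlKernel β x) x := by
  unfold rlKernel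
  simp only [add_sub_cancel_right, Gamma_add_one hβ]
  exact ((hasDerivAt_rpow_const (p := β) (Or.inl hx.ne')).div_const (β * Gamma β)).congr_deriv
    (mul_div_mul_left _ _ hβ)

theorem continuous_rlKernel_add_one {β : ℝ} (hβ : 0 ≤ β) : Continuous (rlKernel (β + 1)) := by
  unfold rlKernel
  simp only [add_sub_cancel_right]
  exact (continuous_rpow_const hβ).div_const _

theorem intervalIntegrable_rlKernel_mul {β t : ℝ} (hβ : 0 < β) (ht : 0 ≤ t) {g : ℝ → ℝ}
    (hg : ContinuousOn g (Icc 0 t)) :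
    IntervalIntegrable (fun s => rlKernel β (t - s) * g s) volume 0 t := by
  have hpow : IntervalIntegrable (fun s => (t - s) ^ (β - 1)) volume 0 t := by
    simpa using (intervalIntegrable_rpow' (r := β - 1) (by linarith)
      (a := t - 0) (b := t - t)).comp_sub_left t
  exact (hpow.div_const _).mul_continuousOn (by rwa [uIcc_of_le ht])

theorem fracInt_eq_intervalIntegral (β : ℝ) {t : ℝ} (ht : 0 ≤ t) (w : ℝ → ℝ) :
    fracInt β w t = ∫ s in (0 : ℝ)..t, rlKernel β (t - s) * w s := by
  rw [integral_of_le ht, integral_Ioc_eq_integral_Ioo]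
  rfl

theorem hasDerivAt_add_mul_rlKernel_add_one_mul {α t s v's : ℝ} {v : ℝ → ℝ} (hα : α ≠ 0)
    (hs : s < t) (hv : HasDerivAt v v's s) :
    HasDerivAt (fun y => α * (t + y) * rlKernel (α + 1) (t - y) * v y)
      (t ^ 2 * (rlKernel α (t - s) * v's)
        - rlKernel α (t - s) * (2 * s * v s + s ^ 2 * v's)
        - 2 * (α - 1) * (rlKernel α (t - s) * (s * v s))
        - α * (α - 1) * (rlKernel (α + 1) (t - s) * v s)) s := by
  have hκ : HasDerivAt (fun y => rlKernel (α + 1) (t - y)) (rlKernel α (t - s) * -1) s :=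
    (hasDerivAt_rlKernel_add_one hα (sub_pos.2 hs)).comp s ((hasDerivAt_id s).const_sub t)
  have hlin : HasDerivAt (fun y => α * (t + y)) (α * 1) s :=
    ((hasDerivAt_id s).const_add t).const_mul α
  refine (hlin.mul hκ).mul hv |>.congr_deriv ?_
  simp only [Pi.mul_apply]
  rw [rlKernel_add_one hα (sub_pos.2 hs).ne']
  field_simp
  ring

theorem sq_mul_fracInt_deriv_eq {α t : ℝ} (hα : 0 < α) (ht : 0 < t) {v v' : ℝ → ℝ}
    (hderiv : ∀ s ∈ Icc 0 t, HasDerivAt v (v' s) s) (hv' : ContinuousOn v' (Icc 0 t)) :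
    t ^ 2 * fracInt α v' t =
      fracInt α (fun s => 2 * s * v s + s ^ 2 * v' s) t
        + 2 * (α - 1) * fracInt α (fun s => s * v s) t
        + α * (α - 1) * fracInt (α + 1) v t
        - t ^ 2 * rlKernel α t * v 0 := by
  have hv : ContinuousOn v (Icc 0 t) := fun s hs => (hderiv s hs).continuousAt.continuousWithinAt
  have hi₁ := intervalIntegrable_rlKernel_mul hα ht.le hv'
  have hi₂ := intervalIntegrable_rlKernel_mul hα ht.le (g := fun s => 2 * s * v s + s ^ 2 * v' s)
    (((continuousOn_const.mul continuousOn_id).mul hv).add ((continuousOn_id.pow 2).mul hv'))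
  have hi₃ := intervalIntegrable_rlKernel_mul hα ht.le (g := fun s => s * v s)
    (continuousOn_id.mul hv)
  have hi₄ := intervalIntegrable_rlKernel_mul (by linarith : 0 < α + 1) ht.le hv
  have hF : ContinuousOn (fun s => α * (t + s) * rlKernel (α + 1) (t - s) * v s) (Icc 0 t) :=
    ((continuous_const.mul (continuous_const.add continuous_id)).mul
      ((continuous_rlKernel_add_one hα.le).comp (continuous_const.sub continuous_id))).continuousOn.mul
      hv
  have hFTC := integral_eq_sub_of_hasDerivAt_of_le ht.le hF
    (fun s hs =>
      hasDerivAt_add_mul_rlKernel_add_one_mul hα.ne' hs.2 (hderiv s (Ioo_subset_Icc_self hs)))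
    ((((hi₁.const_mul _).sub hi₂).sub (hi₃.const_mul _)).sub (hi₄.const_mul _))
  have hFt : α * (t + t) * rlKernel (α + 1) (t - t) * v t = 0 := by
    simp [rlKernel, zero_rpow hα.ne']
  have hF0 : α * (t + 0) * rlKernel (α + 1) (t - 0) * v 0 = t ^ 2 * rlKernel α t * v 0 := by
    rw [add_zero, sub_zero, rlKernel_add_one hα.ne' ht.ne']
    field_simp
  beta_reduce at hFTC
  rw [hFt, hF0, integral_sub (((hi₁.const_mul _).sub hi₂).sub (hi₃.const_mul _)) (hi₄.const_mul _),
    integral_sub ((hi₁.const_mul _).sub hi₂) (hi₃.const_mul _), integral_sub (hi₁.const_mul _) hi₂,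
    intervalIntegral.integral_const_mul, intervalIntegral.integral_const_mul,
    intervalIntegral.integral_const_mul] at hFTC
  simp only [fracInt_eq_intervalIntegral _ ht.le]
  linarith

theorem fracInt_sq_mul_deriv_general (α T : ℝ) (hα0 : 0 < α)
    (v v' : ℝ → ℝ) (hderiv : ∀ s ∈ Set.Icc (0 : ℝ) T, HasDerivAt v (v' s) s)
    (hv' : ContinuousOn v' (Set.Icc 0 T)) :
    ∀ t ∈ Set.Ioc (0 : ℝ) T,
      t ^ 2 * fracInt α v' t =
        fracInt α (fun s => 2 * s * v s + s ^ 2 * v' s) t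
          + 2 * (α - 1) * fracInt α (fun s => s * v s) t
          + α * (α - 1) * fracInt (α + 1) v t
          - t ^ 2 * (t ^ (α - 1) / Real.Gamma α) * v 0 := by
  rintro t ⟨ht, htT⟩
  have hsub : Icc 0 t ⊆ Icc 0 T := Icc_subset_Icc_right htT
  exact sq_mul_fracInt_deriv_eq hα0 ht (fun s hs => hderiv s (hsub hs)) (hv'.mono hsub)

/-- For `α ∈ (0,1)` and `v` continuously differentiable on `[0,T]` (with derivative `v'`),
setting `v₁(s) = s v(s)`, `v₂(s) = s² v(s)` so that `v₂′(s) = 2s v(s) + s² v′(s)`, one has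
for all `t ∈ (0,T]`: `t² (I^α v′)(t) = (I^α v₂′)(t) + 2(α−1)(I^α v₁)(t)
+ α(α−1)(I^{α+1} v)(t) − t²·(t^{α−1}/Γ(α))·v(0)`. -/
theorem fracInt_sq_mul_deriv (α T : ℝ) (hα0 : 0 < α) (hα1 : α < 1) (hT : 0 < T)
    (v v' : ℝ → ℝ) (hderiv : ∀ s ∈ Set.Icc (0 : ℝ) T, HasDerivAt v (v' s) s)
    (hv' : ContinuousOn v' (Set.Icc 0 T)) :
    ∀ t ∈ Set.Ioc (0 : ℝ) T,
      t ^ 2 * fracInt α v' t =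
        fracInt α (fun s => 2 * s * v s + s ^ 2 * v' s) t
          + 2 * (α - 1) * fracInt α (fun s => s * v s) t
          + α * (α - 1) * fracInt (α + 1) v t
          - t ^ 2 * (t ^ (α - 1) / Real.Gamma α) * v 0 :=
  fracInt_sq_mul_deriv_general α T hα0 v v' hderiv hv'
end
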